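/- arXiv:1307.1396 — 2 statements merged into one kernel-verified Lean document; each statement's English description precedes it below -/
import Mathlib

section
/- Let p be a prime, a an integer, h a positive integer, and let n_1, ..., n_K be distinct integers with n_k ≡ a (mod p^h) for all k. Let f ∈ ℤ[z] and suppose p^M divides f(n_k) for each k. Then ord_p(f(a)) ≥ min{K·h, (K-1)·h - L + M}, where L = max over k of ord_p(∏_{j≠k} (n_j - n_k)). -/
open Polynomial Finset

private lemma aux_val_sum {p : ℕ} [Fact p.Prime] (B : ℤ) {ι : Type*} (s : Finset ι) (g : ι → ℚ)
    (hg : ∀ i ∈ s, g i = 0 ∨ B ≤ padicValRat p (g i)) :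
    (∑ i ∈ s, g i) = 0 ∨ B ≤ padicValRat p (∑ i ∈ s, g i) := by
  classical
  induction s using Finset.induction_on with
  | empty => simp
  | insert x s' hni ih =>
    rw [Finset.sum_insert hni]
    have hx := hg x (Finset.mem_insert_self _ _)
    have hrest := ih (fun i hi => hg i (Finset.mem_insert_of_mem hi))
    rcases hx with hx0 | hxv
    · rw [hx0, zero_add]; exact hrest
    rcases hrest with h0 | hv
    · rw [h0, add_zero]; exact Or.inr hxv
    by_cases hsum : g x + ∑ i ∈ s', g i = 0
    · exact Or.inl hsum
    · exact Or.inr (le_trans (le_min hxv hv) (padicValRat.min_le_padicValRat_add hsum))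

/-- Lewis–Montgomery style p-adic interpolation lemma (arbitrary h). -/
theorem stmt_0 (p : ℕ) (hp : p.Prime) (a : ℤ) (h K M : ℕ)
    (hh : 0 < h) (hK : 0 < K) (hM : 0 < M)
    (n : Fin K → ℤ) (hdist : Function.Injective n)
    (hcong : ∀ k, n k ≡ a [ZMOD (p : ℤ) ^ h])
    (f : Polynomial ℤ)
    (hdiv : ∀ k, (p : ℤ) ^ M ∣ f.eval (n k))
    (L : ℕ)
    (hL : L = Finset.univ.sup fun k =>
      padicValInt p (∏ j ∈ Finset.univ.erase k, (n j - n k))) :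
    (p : ℤ) ^ ((min ((K : ℤ) * h) (((K : ℤ) - 1) * h - L + M)).toNat) ∣ f.eval a := by
  haveI : Fact p.Prime := ⟨hp⟩
  classical
  set B : ℤ := ((K : ℤ) - 1) * h - L + M with hB
  set t : ℕ := (min ((K : ℤ) * h) B).toNat with htdef
  -- the monic product polynomial
  set P : Polynomial ℤ := ∏ j : Fin K, (X - C (n j)) with hPdef
  have hPm : P.Monic := monic_prod_of_monic _ _ fun j _ => monic_X_sub_C _
  have hdegP : P.degree = (K : ℕ) := by
    rw [hPdef, Polynomial.degree_prod]
    simp only [Polynomial.degree_X_sub_C]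
    rw [Finset.sum_const, Finset.card_univ, Fintype.card_fin, nsmul_eq_mul, mul_one]
  set r : Polynomial ℤ := f %ₘ P with hrdef
  -- divisibility of a - n k
  have hdvd_h : ∀ k, (p : ℤ) ^ h ∣ (a - n k) := fun k => (hcong k).dvd
  -- the quotient term
  have hPa : (p : ℤ) ^ (K * h) ∣ P.eval a := by
    have h1 : P.eval a = ∏ j : Fin K, (a - n j) := by
      simp [hPdef, Polynomial.eval_prod]
    have h2 : ∏ _j : Fin K, (p : ℤ) ^ h ∣ ∏ j : Fin K, (a - n j) :=
      Finset.prod_dvd_prod_of_dvd _ _ (fun j _ => hdvd_h j)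
    rw [h1]
    calc (p : ℤ) ^ (K * h) = ∏ _j : Fin K, (p : ℤ) ^ h := by
          rw [Finset.prod_const, ← pow_mul, Finset.card_univ, Fintype.card_fin, mul_comm]
      _ ∣ _ := h2
  have ht1 : t ≤ K * h := by
    have hmle : min ((K : ℤ) * h) B ≤ ((K * h : ℕ) : ℤ) := by
      push_cast; exact min_le_left _ _
    have h3 := Int.toNat_le_toNat hmle
    rwa [Int.toNat_natCast] at h3
  have hdvd2 : (p : ℤ) ^ t ∣ P.eval a * (f /ₘ P).eval a :=
    ((pow_dvd_pow _ ht1).trans hPa).mul_right _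
  -- r agrees with f at the nodes
  have hrn : ∀ k, r.eval (n k) = f.eval (n k) := by
    intro k
    have h0 : P.eval (n k) = 0 := by
      rw [hPdef, Polynomial.eval_prod]
      exact Finset.prod_eq_zero (Finset.mem_univ k) (by simp)
    have := congrArg (Polynomial.eval (n k)) (Polynomial.modByMonic_add_div f P)
    simpa [h0] using this
  -- key: p^t ∣ r.eval a
  have hrkey : (p : ℤ) ^ t ∣ r.eval a := by
    set v : Fin K → ℚ := fun k => ((n k : ℤ) : ℚ) with hvdef
    have hvinj : Set.InjOn v (Finset.univ : Finset (Fin K)) := by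
      intro i _ j _ hij
      apply hdist
      have h' : ((n i : ℤ) : ℚ) = ((n j : ℤ) : ℚ) := hij
      exact_mod_cast h'
    set rQ : Polynomial ℚ := r.map (Int.castRingHom ℚ) with hrQ
    have hdeg : rQ.degree < ((Finset.univ : Finset (Fin K)).card : ℕ) := by
      calc rQ.degree ≤ r.degree := Polynomial.degree_map_le
        _ < P.degree := Polynomial.degree_modByMonic_lt f hPm
        _ = (K : ℕ) := hdegP
        _ = _ := by rw [Finset.card_univ, Fintype.card_fin]
    have hinterp := Lagrange.eq_interpolate (v := v) hvinj hdeg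
    -- define the Lagrange terms
    set g : Fin K → ℚ := fun i => ((r.eval (n i) : ℤ) : ℚ) *
      ∏ j ∈ Finset.univ.erase i, ((((n i : ℤ) : ℚ) - ((n j : ℤ) : ℚ))⁻¹ * (((a : ℤ) : ℚ) - ((n j : ℤ) : ℚ))) with hgdef
    have hevalr : ((r.eval a : ℤ) : ℚ) = ∑ i : Fin K, g i := by
      have h1 : ((r.eval a : ℤ) : ℚ) =
          Polynomial.eval ((a : ℤ) : ℚ)
            (Lagrange.interpolate Finset.univ v fun i => rQ.eval (v i)) := by
        rw [← hinterp, hrQ]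
        simp
      rw [h1, Lagrange.interpolate_apply, Polynomial.eval_finset_sum]
      refine Finset.sum_congr rfl fun i _ => ?_
      rw [Polynomial.eval_mul, Polynomial.eval_C, Lagrange.basis, Polynomial.eval_prod]
      congr 1
      · exact Polynomial.eval_intCast_map _ _ _
      · refine Finset.prod_congr rfl fun j _ => ?_
        simp [Lagrange.basisDivisor, hvdef]
    -- per-term valuation bound
    have key : ∀ i : Fin K, g i = 0 ∨ B ≤ padicValRat p (g i) := by
      intro i
      set N : ℤ := r.eval (n i) * ∏ j ∈ Finset.univ.erase i, (a - n j) with hN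
      set D : ℤ := ∏ j ∈ Finset.univ.erase i, (n i - n j) with hD
      have hD0 : D ≠ 0 := by
        rw [hD]
        refine Finset.prod_ne_zero_iff.mpr fun j hj => ?_
        have hji : j ≠ i := (Finset.mem_erase.mp hj).1
        exact sub_ne_zero.mpr fun e => hji (hdist e).symm
      have hgi : g i = (N : ℚ) / (D : ℚ) := by
        rw [hgdef]
        simp only
        rw [Finset.prod_mul_distrib, Finset.prod_inv_distrib]
        push_cast [hN, hD]
        field_simp
      by_cases hN0 : N = 0
      · left; rw [hgi, hN0]; simp
      · right
        rw [hgi, padicValRat.div (by exact_mod_cast hN0) (by exact_mod_cast hD0),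
          padicValRat.of_int, padicValRat.of_int]
        have hNval : M + (K - 1) * h ≤ padicValInt p N := by
          have hdvdN : (p : ℤ) ^ (M + (K - 1) * h) ∣ N := by
            rw [pow_add, hN]
            refine mul_dvd_mul ?_ ?_
            · rw [hrn i]; exact hdiv i
            · have h2 : ∏ _j ∈ Finset.univ.erase i, (p : ℤ) ^ h ∣
                  ∏ j ∈ Finset.univ.erase i, (a - n j) :=
                Finset.prod_dvd_prod_of_dvd _ _ (fun j _ => hdvd_h j)
              calc (p : ℤ) ^ ((K - 1) * h) = ∏ _j ∈ Finset.univ.erase i, (p : ℤ) ^ h := by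
                    rw [Finset.prod_const, ← pow_mul, Finset.card_erase_of_mem (Finset.mem_univ i),
                      Finset.card_univ, Fintype.card_fin, mul_comm]
                _ ∣ _ := h2
          rcases (padicValInt_dvd_iff _ _).mp hdvdN with h' | h'
          · exact absurd h' hN0
          · exact h'
        have hDval : padicValInt p D ≤ L := by
          have hDD : padicValInt p D =
              padicValInt p (∏ j ∈ Finset.univ.erase i, (n j - n i)) := by
            have hsgn : D = (-1 : ℤ) ^ (Finset.univ.erase i).card *
                ∏ j ∈ Finset.univ.erase i, (n j - n i) := by
              rw [hD, ← Finset.prod_const, ← Finset.prod_mul_distrib]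
              exact Finset.prod_congr rfl fun j _ => by ring
            rw [hsgn]
            unfold padicValInt
            congr 1
            simp [Int.natAbs_mul, Int.natAbs_pow]
          rw [hDD, hL]
          exact Finset.le_sup (f := fun k => padicValInt p (∏ j ∈ Finset.univ.erase k, (n j - n k))) (Finset.mem_univ i)
        -- conclude B ≤ valN - valD
        have hc : ((K : ℤ) - 1) * (h : ℤ) = (((K - 1) * h : ℕ) : ℤ) := by
          push_cast [Nat.cast_sub hK]
          ring
        rw [hB, hc]
        omega
    -- combine
    rcases aux_val_sum B Finset.univ g (fun i _ => key i) with h0 | hv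
    · rw [← hevalr] at h0
      have : r.eval a = 0 := by exact_mod_cast h0
      rw [this]; exact dvd_zero _
    · rw [← hevalr, padicValRat.of_int] at hv
      have htle : t ≤ padicValInt p (r.eval a) := by
        have hmle : min ((K : ℤ) * h) B ≤ (padicValInt p (r.eval a) : ℤ) :=
          le_trans (min_le_right _ _) hv
        have h4 := Int.toNat_le_toNat hmle
        rwa [Int.toNat_natCast] at h4
      rcases (padicValInt_dvd_iff t (r.eval a)).mpr (Or.inr htle) with hdd
      exact hdd
  -- put the two pieces together
  have heval : f.eval a = r.eval a + P.eval a * (f /ₘ P).eval a := by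
    conv_lhs => rw [← Polynomial.modByMonic_add_div f P]
    simp [hrdef]
  rw [heval]
  exact dvd_add hrkey hdvd2
end

section
/- Let M be a positive integer and let 𝓜 be a set of integers contained in the interval [M, 2M). Then for every m ∈ 𝓜 and every prime p, ord_p(∏_{r ∈ 𝓜, r ≠ m} (r - m)) ≤ ord_p((m - M)! · (2M - m - 1)!) ≤ ord_p((M-1)!). -/
open Finset

private lemma pv_le_of_dvd (p : ℕ) (hp : p.Prime) {n k : ℕ} (hn : n ≠ 0) (h : n ∣ k)
    (hk : k ≠ 0) : padicValNat p n ≤ padicValNat p k := by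
  haveI : Fact p.Prime := ⟨hp⟩
  obtain ⟨c, rfl⟩ := h
  have hc : c ≠ 0 := by rintro rfl; simp at hk
  rw [padicValNat.mul hn hc]
  exact Nat.le_add_right _ _

private lemma prod_subset_factorial (a : ℕ) (T : Finset ℕ) (hT : T ⊆ Finset.Icc 1 a) :
    (∏ x ∈ T, x) ∣ a.factorial := by
  have : (∏ x ∈ T, x) ∣ ∏ x ∈ Finset.Icc 1 a, x :=
    Finset.prod_dvd_prod_of_subset T _ id hT
  rwa [show Finset.Icc 1 a = Finset.Ico 1 (a + 1) by rw [Finset.Ico_add_one_right_eq_Icc],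
    Finset.prod_Ico_id_eq_factorial] at this

/-- The product of differences over a set in [M, 2M) has p-adic valuation at most
    that of (m-M)!(2M-m-1)!, which is at most that of (M-1)!. -/
theorem stmt_2 (M : ℕ) (hM : 0 < M) (S : Finset ℤ)
    (hS : ∀ m ∈ S, (M : ℤ) ≤ m ∧ m < 2 * M)
    (m : ℤ) (hm : m ∈ S) (p : ℕ) (hp : p.Prime) :
    padicValInt p (∏ r ∈ S.erase m, (r - m)) ≤
      padicValNat p ((m - M).toNat.factorial * (2 * M - m - 1).toNat.factorial) ∧
    padicValNat p ((m - M).toNat.factorial * (2 * M - m - 1).toNat.factorial) ≤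
      padicValNat p (M - 1).factorial := by
  obtain ⟨hmM, hm2M⟩ := hS m hm
  set a : ℕ := (m - (M : ℤ)).toNat with ha
  set b : ℕ := (2 * (M : ℤ) - m - 1).toNat with hb
  -- key divisibility 1
  have hsplit : S.erase m = (S.erase m).filter (· < m) ∪ (S.erase m).filter (¬ · < m) :=
    (Finset.filter_union_filter_not_eq _ _).symm
  have hprodAbs : (∏ r ∈ S.erase m, (r - m)).natAbs = ∏ r ∈ S.erase m, (r - m).natAbs := by
    exact map_prod Int.natAbsHom _ _
  have hdvd1 : (∏ r ∈ S.erase m, (r - m)).natAbs ∣ a.factorial * b.factorial := by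
    rw [hprodAbs, ← Finset.prod_filter_mul_prod_filter_not (S.erase m) (· < m)]
    apply mul_dvd_mul
    · -- negative part
      set T := (S.erase m).filter (· < m) with hT
      have hinj : ∀ x ∈ T, ∀ y ∈ T, (m - x).toNat = (m - y).toNat → x = y := by
        intro x hx y hy hxy
        rw [hT] at hx hy
        simp only [Finset.mem_filter, Finset.mem_erase] at hx hy
        omega
      have heq : ∏ r ∈ T, (r - m).natAbs = ∏ n ∈ T.image (fun r : ℤ => (m - r).toNat), n := by
        rw [Finset.prod_image hinj]
        apply Finset.prod_congr rfl
        intro r hr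
        rw [hT] at hr
        simp only [Finset.mem_filter, Finset.mem_erase] at hr
        omega
      rw [heq]
      apply prod_subset_factorial
      intro n hn
      simp only [Finset.mem_image] at hn
      obtain ⟨r, hr, rfl⟩ := hn
      simp only [hT, Finset.mem_filter, Finset.mem_erase] at hr
      obtain ⟨⟨hrm, hrS⟩, hrlt⟩ := hr
      obtain ⟨h1, h2⟩ := hS r hrS
      simp only [Finset.mem_Icc]
      omega
    · -- positive part
      set T := (S.erase m).filter (¬ · < m) with hT
      have hinj : ∀ x ∈ T, ∀ y ∈ T, (x - m).toNat = (y - m).toNat → x = y := by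
        intro x hx y hy hxy
        rw [hT] at hx hy
        simp only [Finset.mem_filter, Finset.mem_erase, not_lt] at hx hy
        omega
      have heq : ∏ r ∈ T, (r - m).natAbs = ∏ n ∈ T.image (fun r : ℤ => (r - m).toNat), n := by
        rw [Finset.prod_image hinj]
        apply Finset.prod_congr rfl
        intro r hr
        rw [hT] at hr
        simp only [Finset.mem_filter, Finset.mem_erase, not_lt] at hr
        omega
      rw [heq]
      apply prod_subset_factorial
      intro n hn
      simp only [Finset.mem_image] at hn
      obtain ⟨r, hr, rfl⟩ := hn
      simp only [hT, Finset.mem_filter, Finset.mem_erase, not_lt] at hr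
      obtain ⟨⟨hrm, hrS⟩, hrge⟩ := hr
      obtain ⟨h1, h2⟩ := hS r hrS
      simp only [Finset.mem_Icc]
      omega
  have hPne : (∏ r ∈ S.erase m, (r - m)) ≠ 0 := by
    apply Finset.prod_ne_zero_iff.mpr
    intro r hr
    have := Finset.ne_of_mem_erase hr
    omega
  have hab : a + b = M - 1 := by omega
  constructor
  · unfold padicValInt
    exact pv_le_of_dvd p hp (by simpa [Int.natAbs_ne_zero] using hPne) hdvd1
      (Nat.mul_ne_zero (Nat.factorial_ne_zero _) (Nat.factorial_ne_zero _))
  · apply pv_le_of_dvd p hp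
      (Nat.mul_ne_zero (Nat.factorial_ne_zero _) (Nat.factorial_ne_zero _))
      _ (Nat.factorial_ne_zero _)
    rw [← hab]
    exact Nat.factorial_mul_factorial_dvd_factorial_add a b
end
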